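/- Suppose w₀ ∈ ℝ is such that (w₀, β(w₀)) ∈ C^u_i ∩ C^d_j for some 1 ≤ i ≤ N_u and 1 ≤ j ≤ N_d. Then the right derivative of V at w₀ satisfies V'⁺(w₀) = max{ ((1 − p)/(1 − q))·g'⁺(x^d_j), (p/q)·f'⁺(x^u_i) }, where q = (R − d)/(u − d). -/

import Mathlib

/-- `f` is affine on the set `s`. -/
def AffOn (f : ℝ → ℝ) (s : Set ℝ) : Prop := ∃ a c : ℝ, ∀ y ∈ s, f y = a * y + c

/-- Left derivative of `f` at `x`. -/
noncomputable def lDeriv (f : ℝ → ℝ) (x : ℝ) : ℝ := derivWithin f (Set.Iio x) x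

/-- Right derivative of `f` at `x`. -/
noncomputable def rDeriv (f : ℝ → ℝ) (x : ℝ) : ℝ := derivWithin f (Set.Ioi x) x

/-- `f` is piecewise affine with partition points `x 1 < x 2 < … < x N`
(no partition points if `N = 0`, in which case `f` is affine on all of `ℝ`). -/
def PWAff (f : ℝ → ℝ) (N : ℕ) (x : ℕ → ℝ) : Prop :=
  (∀ i, 1 ≤ i → i + 1 ≤ N → x i < x (i + 1)) ∧
  (N = 0 → AffOn f Set.univ) ∧
  (1 ≤ N → AffOn f (Set.Iic (x 1)) ∧ AffOn f (Set.Ici (x N)) ∧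
    ∀ i, 1 ≤ i → i + 1 ≤ N → AffOn f (Set.Icc (x i) (x (i + 1))))

/-- `f` belongs to class `H` as witnessed by the points `x 1 < … < x N`:
piecewise linear, concave on `ℝ`, and eventually constant. -/
def ClassHAux (f : ℝ → ℝ) (N : ℕ) (x : ℕ → ℝ) : Prop :=
  PWAff f N x ∧ ConcaveOn ℝ Set.univ f ∧ ∃ xb : ℝ, ∀ y, xb ≤ y → f y = f xb

/-- `f` belongs to class `H`. -/
def ClassH (f : ℝ → ℝ) : Prop := ∃ N x, ClassHAux f N x

/-- `x 1 < … < x N` are the singular values of the class-`H` function `f`: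
they partition `ℝ` into pieces on which `f` is affine and each of them is a genuine
kink, i.e. the right derivative is strictly smaller than the left derivative there. -/
def HasSingVals (f : ℝ → ℝ) (N : ℕ) (x : ℕ → ℝ) : Prop :=
  ClassHAux f N x ∧ ∀ i, 1 ≤ i → i ≤ N → rDeriv f (x i) < lDeriv f (x i)

/-- The dynamic-programming objective
`H(w,b) = R⁻¹ (p f(wR + b(u−R)) + (1−p) g(wR + b(d−R)))`. -/
noncomputable def Hfun (R u d p : ℝ) (f g : ℝ → ℝ) (w b : ℝ) : ℝ :=
  R⁻¹ * (p * f (w * R + b * (u - R)) + (1 - p) * g (w * R + b * (d - R)))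

/-- The value function `V(w) = sup_b H(w,b)`. -/
noncomputable def Vfun (R u d p : ℝ) (f g : ℝ → ℝ) (w : ℝ) : ℝ :=
  ⨆ b : ℝ, Hfun R u d p f g w b

/-- The set of maximizers `B(w) = {b : H(w,b) = V(w)}`. -/
noncomputable def Bset (R u d p : ℝ) (f g : ℝ → ℝ) (w : ℝ) : Set ℝ :=
  {b : ℝ | Hfun R u d p f g w b = Vfun R u d p f g w}

/-- The minimal optimal strategy `β(w) = min B(w)`. -/
noncomputable def betaFun (R u d p : ℝ) (f g : ℝ → ℝ) (w : ℝ) : ℝ :=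
  sInf (Bset R u d p f g w)

/-- The grid line `C^u = {(w,b) : wR + b(u−R) = c}`. -/
def Cu (R u : ℝ) (c : ℝ) : Set (ℝ × ℝ) := {pt | pt.1 * R + pt.2 * (u - R) = c}

/-- The grid line `C^d = {(w,b) : wR + b(d−R) = c}`. -/
def Cd (R d : ℝ) (c : ℝ) : Set (ℝ × ℝ) := {pt | pt.1 * R + pt.2 * (d - R) = c}

/-- The grid `G`, the union of the lines `C^u_i`, `1 ≤ i ≤ Nu`, and `C^d_j`, `1 ≤ j ≤ Nd`. -/
def Grid (R u d : ℝ) (Nu : ℕ) (xu : ℕ → ℝ) (Nd : ℕ) (xd : ℕ → ℝ) : Set (ℝ × ℝ) :=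
  (⋃ i ∈ Finset.Icc 1 Nu, Cu R u (xu i)) ∪ (⋃ j ∈ Finset.Icc 1 Nd, Cd R d (xd j))

/-- The open parallelogram `D_ij`, for `0 ≤ i ≤ Nu`, `0 ≤ j ≤ Nd`, with the conventions
`x^u_0 = x^d_0 = −∞` and `x^u_{Nu+1} = x^d_{Nd+1} = +∞`. -/
def Dset (R u d : ℝ) (Nu : ℕ) (xu : ℕ → ℝ) (Nd : ℕ) (xd : ℕ → ℝ) (i j : ℕ) : Set (ℝ × ℝ) :=
  {pt | (1 ≤ i → xu i < pt.1 * R + pt.2 * (u - R)) ∧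
        (i < Nu → pt.1 * R + pt.2 * (u - R) < xu (i + 1)) ∧
        (1 ≤ j → xd j < pt.1 * R + pt.2 * (d - R)) ∧
        (j < Nd → pt.1 * R + pt.2 * (d - R) < xd (j + 1))}

/-!
In the coordinates `y = wR + b(u - R)`, `z = wR + b(d - R)` one has `q y + (1 - q) z = wR`, so
`V` is the sup-convolution of `R⁻¹ p f` and `R⁻¹ (1 - p) g` along these lines, and at `w₀` the
supremum is attained at the pair of kinks `(x^u_i, x^d_j)`. Moving along the line through this
pair gives first-order conditions, which say exactly that for `M` the claimed maximum, `qM/p` and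
`(1 - q)M/(1 - p)` are supergradients of `f` and `g` at the kinks; adding them up gives
`V w ≤ V w₀ + M (w - w₀)`. Conversely, increasing `w` while keeping `y` (or `z`) at its kink gains
exactly `M (w - w₀)` for small steps, because `f` and `g` are affine just right of their kinks.
-/

open Filter Topology Set

section LocallyAffine

variable {f : ℝ → ℝ} {x a : ℝ}

lemma hasDerivWithinAt_Ioi_of_eventually_eq
    (h : ∀ᶠ t in 𝓝[>] 0, f (x + t) = f x + a * t) : HasDerivWithinAt f a (Ioi x) x := by
  have hlin : HasDerivAt (fun y => f x + a * (y - x)) a x := by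
    simpa using ((hasDerivAt_id x).sub_const x).const_mul a |>.const_add (f x)
  refine hlin.hasDerivWithinAt.congr_of_eventuallyEq ?_ (by simp)
  rw [← add_zero x, ← map_add_left_nhdsGT, eventuallyEq_map]
  filter_upwards [h] with t ht
  simp [ht]

lemma hasDerivWithinAt_Iio_of_eventually_eq
    (h : ∀ᶠ t in 𝓝[>] 0, f (x - t) = f x - a * t) : HasDerivWithinAt f a (Iio x) x := by
  have hlin : HasDerivAt (fun y => f x + a * (y - x)) a x := by
    simpa using ((hasDerivAt_id x).sub_const x).const_mul a |>.const_add (f x)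
  refine hlin.hasDerivWithinAt.congr_of_eventuallyEq ?_ (by simp)
  rw [← sub_zero x, ← Filter.map_subLeft_nhdsGT, eventuallyEq_map]
  filter_upwards [h] with t ht
  simp only [Function.comp_apply, ht, sub_zero, sub_sub_cancel_left, mul_neg]
  ring


lemma rDeriv_eq_of_le_of_eventually_le {S : ℝ → ℝ} {x M : ℝ} (hle : ∀ y, S y ≤ S x + M * (y - x))
    (hge : ∀ᶠ t in 𝓝[>] 0, S x + M * t ≤ S (x + t)) : rDeriv S x = M := by
  refine (hasDerivWithinAt_Ioi_of_eventually_eq (hge.mono fun t ht => ?_)).derivWithin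
    (uniqueDiffWithinAt_Ioi x)
  exact le_antisymm (by simpa using hle (x + t)) ht

end LocallyAffine


namespace ConcaveOn

variable {f : ℝ → ℝ} (hf : ConcaveOn ℝ univ f) {x ar al : ℝ}
include hf

lemma le_add_mul_sub (hr : HasDerivWithinAt f ar (Ioi x) x) (hl : HasDerivWithinAt f al (Iio x) x)
    {m : ℝ} (hrm : ar ≤ m) (hml : m ≤ al) (y : ℝ) : f y ≤ f x + m * (y - x) := by
  rcases lt_trichotomy y x with hyx | rfl | hxy
  · have hslope := hf.le_slope_of_hasDerivWithinAt_Iio (mem_univ y) (mem_univ x) hyx hl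
    rw [slope_def_field, le_div_iff₀ (sub_pos.2 hyx)] at hslope
    nlinarith
  · simp
  · have hslope := hf.slope_le_of_hasDerivWithinAt_Ioi (mem_univ x) (mem_univ y) hxy hr
    rw [slope_def_field, div_le_iff₀ (sub_pos.2 hxy)] at hslope
    nlinarith

lemma rightSlope_le_leftSlope (hr : ∀ᶠ t in 𝓝[>] 0, f (x + t) = f x + ar * t)
    (hl : ∀ᶠ t in 𝓝[>] 0, f (x - t) = f x - al * t) : ar ≤ al := by
  obtain ⟨t, ⟨htr, htl⟩, ht⟩ := ((hr.and hl).and self_mem_nhdsWithin).exists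
  replace ht : 0 < t := ht
  have := hf.slope_anti_adjacent (y := x) (mem_univ (x - t)) (mem_univ (x + t)) (by linarith)
    (by linarith)
  rwa [htr, htl, show x + t - x = t by ring, show x - (x - t) = t by ring, add_sub_cancel_left,
    sub_sub_cancel, mul_div_cancel_right₀ _ ht.ne', mul_div_cancel_right₀ _ ht.ne'] at this

end ConcaveOn
section SupConvolution

variable {S P Q : ℝ → ℝ} {a c y₀ z₀ : ℝ}

lemma mul_le_mul_of_forall_add_le (ha : 0 < a) (hc : 0 < c)
    (hopt : ∀ y z, a * y + c * z = a * y₀ + c * z₀ → P y + Q z ≤ P y₀ + Q z₀) {Pr Ql : ℝ}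
    (hPr : ∀ᶠ t in 𝓝[>] 0, P (y₀ + t) = P y₀ + Pr * t)
    (hQl : ∀ᶠ t in 𝓝[>] 0, Q (z₀ - t) = Q z₀ - Ql * t) : c * Pr ≤ a * Ql := by
  obtain ⟨t, ⟨hPt, hQt⟩, ht⟩ := (((eventually_nhdsGT_zero_mul_left hc hPr).and
    (eventually_nhdsGT_zero_mul_left ha hQl)).and self_mem_nhdsWithin).exists
  have := hopt (y₀ + c * t) (z₀ - a * t) (by ring)
  rw [hPt, hQt] at this
  exact le_of_mul_le_mul_right (by linarith) (show 0 < t from ht)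

lemma eventually_add_div_mul_le (hc : 0 < c) (hge : ∀ y z, P y + Q z ≤ S (a * y + c * z))
    {Qr : ℝ} (hQr : ∀ᶠ t in 𝓝[>] 0, Q (z₀ + t) = Q z₀ + Qr * t) :
    ∀ᶠ t in 𝓝[>] 0, P y₀ + Q z₀ + Qr / c * t ≤ S (a * y₀ + c * z₀ + t) := by
  filter_upwards [eventually_nhdsGT_zero_mul_left (inv_pos.2 hc) hQr] with t ht
  have := hge y₀ (z₀ + c⁻¹ * t)
  rwa [ht, mul_add, mul_inv_cancel_left₀ hc.ne', ← add_assoc, ← add_assoc,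
    show Qr * (c⁻¹ * t) = Qr / c * t by ring] at this

lemma le_add_mul_sub_of_forall_le
    (hle : ∀ s B, (∀ y z, a * y + c * z = s → P y + Q z ≤ B) → S s ≤ B) {M : ℝ}
    (hP : ∀ y, P y ≤ P y₀ + a * M * (y - y₀)) (hQ : ∀ z, Q z ≤ Q z₀ + c * M * (z - z₀)) (s : ℝ) : S s ≤ P y₀ + Q z₀ + M * (s - (a * y₀ + c * z₀)) :=
  hle s _ fun y z hyz => by
    rw [← hyz]; linarith [hP y, hQ z]

/-- `hge` and `hle` say that `S s` is the supremum of `P y + Q z` over the line `a y + c z = s`. -/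
theorem rDeriv_supConv_eq_max {Pr Pl Qr Ql : ℝ} (ha : 0 < a) (hc : 0 < c)
    (hP : ConcaveOn ℝ univ P) (hQ : ConcaveOn ℝ univ Q)
    (hPr : ∀ᶠ t in 𝓝[>] 0, P (y₀ + t) = P y₀ + Pr * t)
    (hPl : ∀ᶠ t in 𝓝[>] 0, P (y₀ - t) = P y₀ - Pl * t)
    (hQr : ∀ᶠ t in 𝓝[>] 0, Q (z₀ + t) = Q z₀ + Qr * t)
    (hQl : ∀ᶠ t in 𝓝[>] 0, Q (z₀ - t) = Q z₀ - Ql * t)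
    (hge : ∀ y z, P y + Q z ≤ S (a * y + c * z))
    (hle : ∀ s B, (∀ y z, a * y + c * z = s → P y + Q z ≤ B) → S s ≤ B)
    (hopt : ∀ y z, a * y + c * z = a * y₀ + c * z₀ → P y + Q z ≤ P y₀ + Q z₀) :
    rDeriv S (a * y₀ + c * z₀) = max (Qr / c) (Pr / a) := by
  have hPk := hP.rightSlope_le_leftSlope hPr hPl
  have hQk := hQ.rightSlope_le_leftSlope hQr hQl
  have hPQ : c * Pr ≤ a * Ql := mul_le_mul_of_forall_add_le ha hc hopt hPr hQl
  have hQP : a * Qr ≤ c * Pl := mul_le_mul_of_forall_add_le hc ha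
    (fun z y h => by linarith [hopt y z (by linarith)]) hQr hPl
  set M := max (Qr / c) (Pr / a) with hM
  have hPM : a * M ≤ Pl := by
    rw [← le_div_iff₀' ha]
    refine max_le ?_ (div_le_div_of_nonneg_right hPk ha.le)
    rw [div_le_div_iff₀ hc ha]; linarith
  have hQM : c * M ≤ Ql := by
    rw [← le_div_iff₀' hc]
    refine max_le (div_le_div_of_nonneg_right hQk hc.le) ?_
    rw [div_le_div_iff₀ ha hc]; linarith
  have hPsup := hP.le_add_mul_sub (hasDerivWithinAt_Ioi_of_eventually_eq hPr)
    (hasDerivWithinAt_Iio_of_eventually_eq hPl) ((div_le_iff₀' ha).1 (le_max_right _ _)) hPM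
  have hQsup := hQ.le_add_mul_sub (hasDerivWithinAt_Ioi_of_eventually_eq hQr)
    (hasDerivWithinAt_Iio_of_eventually_eq hQl) ((div_le_iff₀' hc).1 (le_max_left _ _)) hQM
  have hS₀ : S (a * y₀ + c * z₀) = P y₀ + Q z₀ := le_antisymm (hle _ _ hopt) (hge y₀ z₀)
  refine rDeriv_eq_of_le_of_eventually_le
    (fun s => hS₀ ▸ le_add_mul_sub_of_forall_le hle hPsup hQsup s) ?_
  rw [hS₀]
  rcases max_choice (Qr / c) (Pr / a) with h | h <;> rw [hM, h]
  · exact eventually_add_div_mul_le hc hge hQr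
  · filter_upwards [eventually_add_div_mul_le (y₀ := z₀) (z₀ := y₀) (S := S) ha
      (fun z y => by rw [add_comm, add_comm (c * z)]; exact hge y z) hPr] with t ht
    rwa [add_comm (Q z₀), add_comm (c * z₀)] at ht

end SupConvolution

section PiecewiseAffine

variable {f : ℝ → ℝ}

lemma AffOn.eventually_add_eq {s : Set ℝ} {x : ℝ} (hf : AffOn f s) (hx : x ∈ s)
    (hs : ∀ᶠ t in 𝓝[>] 0, x + t ∈ s) : ∀ᶠ t in 𝓝[>] 0, f (x + t) = f x + rDeriv f x * t := by
  obtain ⟨a, c, hac⟩ := hf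
  have h : ∀ᶠ t in 𝓝[>] 0, f (x + t) = f x + a * t :=
    hs.mono fun t ht => by rw [hac _ ht, hac _ hx]; ring
  rwa [rDeriv, (hasDerivWithinAt_Ioi_of_eventually_eq h).derivWithin (uniqueDiffWithinAt_Ioi x)]

lemma AffOn.eventually_sub_eq {s : Set ℝ} {x : ℝ} (hf : AffOn f s) (hx : x ∈ s)
    (hs : ∀ᶠ t in 𝓝[>] 0, x - t ∈ s) : ∀ᶠ t in 𝓝[>] 0, f (x - t) = f x - lDeriv f x * t := by
  obtain ⟨a, c, hac⟩ := hf
  have h : ∀ᶠ t in 𝓝[>] 0, f (x - t) = f x - a * t :=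
    hs.mono fun t ht => by rw [hac _ ht, hac _ hx]; ring
  rwa [lDeriv, (hasDerivWithinAt_Iio_of_eventually_eq h).derivWithin (uniqueDiffWithinAt_Iio x)]

variable {N : ℕ} {x : ℕ → ℝ} (h : PWAff f N x) {i : ℕ} (hi1 : 1 ≤ i) (hiN : i ≤ N)
include h hi1 hiN

lemma PWAff.eventually_add_eq :
    ∀ᶠ t in 𝓝[>] 0, f (x i + t) = f (x i) + rDeriv f (x i) * t := by
  rcases hiN.lt_or_eq with hlt | rfl
  · have hx := h.1 i hi1 hlt
    refine ((h.2.2 (by omega)).2.2 i hi1 hlt).eventually_add_eq ⟨le_rfl, hx.le⟩ ?_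
    filter_upwards [Ioo_mem_nhdsGT (sub_pos.2 hx)] with t ht
    constructor <;> linarith [ht.1, ht.2]
  · refine (h.2.2 hi1).2.1.eventually_add_eq self_mem_Ici ?_
    filter_upwards [eventually_mem_nhdsWithin] with t (ht : 0 < t)
    exact le_add_of_nonneg_right ht.le

lemma PWAff.eventually_sub_eq :
    ∀ᶠ t in 𝓝[>] 0, f (x i - t) = f (x i) - lDeriv f (x i) * t := by
  rcases hi1.eq_or_lt with rfl | hlt
  · refine (h.2.2 hiN).1.eventually_sub_eq self_mem_Iic ?_
    filter_upwards [eventually_mem_nhdsWithin] with t (ht : 0 < t)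
    exact sub_le_self _ ht.le
  · obtain ⟨k, rfl⟩ : ∃ k, i = k + 1 := ⟨i - 1, by omega⟩
    have hx := h.1 k (by omega) hiN
    refine ((h.2.2 (by omega)).2.2 k (by omega) hiN).eventually_sub_eq ⟨hx.le, le_rfl⟩ ?_
    filter_upwards [Ioo_mem_nhdsGT (sub_pos.2 hx)] with t ht
    constructor <;> linarith [ht.1, ht.2]

end PiecewiseAffine

namespace ConcaveOn

variable {f : ℝ → ℝ} (hf : ConcaveOn ℝ univ f) {xb : ℝ} (hconst : ∀ y, xb ≤ y → f y = f xb)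
include hf hconst

lemma le_of_forall_ge_eq (y : ℝ) : f y ≤ f xb := by
  rcases le_or_gt xb y with h | h
  · exact (hconst y h).le
  · have := hf.slope_anti_adjacent (mem_univ y) (mem_univ (xb + 1)) h (lt_add_one xb)
    rw [hconst _ (by linarith), sub_self, zero_div, le_div_iff₀ (sub_pos.2 h), zero_mul] at this
    linarith

lemma tendsto_atBot_atBot_of_forall_ge_eq (hnc : ∃ a b, f a ≠ f b) : Tendsto f atBot atBot := by
  obtain ⟨y₀, hy₀⟩ : ∃ y₀, f y₀ < f xb := by
    obtain ⟨a, b, hab⟩ := hnc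
    by_contra! H
    exact hab (le_antisymm (hf.le_of_forall_ge_eq hconst a) (H a) |>.trans
      (le_antisymm (hf.le_of_forall_ge_eq hconst b) (H b)).symm)
  have hy₀xb : y₀ < xb := lt_of_not_ge fun h => hy₀.ne (hconst y₀ h)
  set s := (f xb - f y₀) / (xb - y₀) with hs
  have hs0 : 0 < s := div_pos (by linarith) (by linarith)
  have hbound : ∀ y < y₀, f y ≤ f y₀ + s * (y - y₀) := fun y hy => by
    have := hf.slope_anti_adjacent (mem_univ y) (mem_univ xb) hy hy₀xb
    rw [← hs, le_div_iff₀ (sub_pos.2 hy)] at this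
    linarith
  refine tendsto_atBot_mono' _ ((eventually_lt_atBot y₀).mono hbound) ?_
  exact tendsto_atBot_add_const_left _ _
    ((tendsto_atBot_add_const_right _ (-y₀) tendsto_id).const_mul_atBot hs0)

end ConcaveOn

lemma Continuous.le_apply_sInf_argmax {φ : ℝ → ℝ} (hφ : Continuous φ)
    (h : Tendsto φ (cocompact ℝ) atBot) (b : ℝ) : φ b ≤ φ (sInf {b | φ b = ⨆ c, φ c}) := by
  obtain ⟨b₁, hb₁⟩ := hφ.exists_forall_ge h
  have hsup : ⨆ c, φ c = φ b₁ :=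
    le_antisymm (ciSup_le hb₁) (le_ciSup ⟨φ b₁, forall_mem_range.2 hb₁⟩ b₁)
  have hbdd : BddBelow {b | φ b = ⨆ c, φ c} := by
    have hbot : Tendsto φ atBot atBot :=
      h.mono_left (cocompact_eq_atBot_atTop (α := ℝ) ▸ le_sup_left)
    obtain ⟨T, hT⟩ := eventually_atBot.1 (hbot.eventually (eventually_lt_atBot (φ b₁)))
    exact ⟨T, fun c hc => le_of_not_gt fun hcT => (hT c hcT.le).ne (hc.trans hsup)⟩
  rw [(isClosed_eq hφ continuous_const).csInf_mem ⟨b₁, hsup.symm⟩ hbdd, hsup]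
  exact hb₁ b

section ValueFunction

variable {R u d p : ℝ} {f g : ℝ → ℝ}

lemma continuous_Hfun (hf : Continuous f) (hg : Continuous g) (w : ℝ) :
    Continuous (Hfun R u d p f g w) := by
  unfold Hfun; fun_prop

lemma tendsto_Hfun_cocompact (hR : 0 < R) (hdR : d < R) (hRu : R < u) (hp0 : 0 < p)
    (hp1 : p < 1) {Cf Cg : ℝ} (hfC : ∀ y, f y ≤ Cf) (hgC : ∀ z, g z ≤ Cg)
    (hf : Tendsto f atBot atBot) (hg : Tendsto g atBot atBot) (w : ℝ) :
    Tendsto (Hfun R u d p f g w) (cocompact ℝ) atBot := by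
  have hp1' : 0 < 1 - p := sub_pos.2 hp1
  rw [cocompact_eq_atBot_atTop, tendsto_sup]
  constructor
  · have hy : Tendsto (fun b => w * R + b * (u - R)) atBot atBot :=
      tendsto_atBot_add_const_left _ _ (tendsto_id.atBot_mul_const (sub_pos.2 hRu))
    refine tendsto_atBot_mono (fun b => ?_) (Tendsto.const_mul_atBot (inv_pos.2 hR)
      (tendsto_atBot_add_const_right _ ((1 - p) * Cg) ((hf.comp hy).const_mul_atBot hp0)))
    dsimp only [Hfun, Function.comp_apply]
    gcongr
    exact hgC _
  · have hz : Tendsto (fun b => w * R + b * (d - R)) atTop atBot :=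
      tendsto_atBot_add_const_left _ _ (tendsto_id.atTop_mul_const_of_neg (sub_neg.2 hdR))
    refine tendsto_atBot_mono (fun b => ?_) (Tendsto.const_mul_atBot (inv_pos.2 hR)
      (tendsto_atBot_add_const_left _ (p * Cf) ((hg.comp hz).const_mul_atBot hp1')))
    dsimp only [Hfun, Function.comp_apply]
    gcongr
    exact hfC _

lemma Hfun_le_Hfun_betaFun (hR : 0 < R) (hdR : d < R) (hRu : R < u) (hp0 : 0 < p) (hp1 : p < 1)
    (hf : ConcaveOn ℝ univ f) {xf : ℝ} (hxf : ∀ y, xf ≤ y → f y = f xf) (hfnc : ∃ a b, f a ≠ f b)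
    (hg : ConcaveOn ℝ univ g) {xg : ℝ} (hxg : ∀ z, xg ≤ z → g z = g xg) (hgnc : ∃ a b, g a ≠ g b)
    (w b : ℝ) : Hfun R u d p f g w b ≤ Hfun R u d p f g w (betaFun R u d p f g w) :=
  (continuous_Hfun (continuousOn_univ.1 (hf.continuousOn isOpen_univ))
      (continuousOn_univ.1 (hg.continuousOn isOpen_univ)) w).le_apply_sInf_argmax
    (tendsto_Hfun_cocompact hR hdR hRu hp0 hp1 (hf.le_of_forall_ge_eq hxf)
      (hg.le_of_forall_ge_eq hxg) (hf.tendsto_atBot_atBot_of_forall_ge_eq hxf hfnc)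
      (hg.tendsto_atBot_atBot_of_forall_ge_eq hxg hgnc) w) b

variable {q : ℝ} (hq : q = (R - d) / (u - d)) (hud : u ≠ d)
include hq hud

lemma weighted_add_Hfun_args (hR : R ≠ 0) (w b : ℝ) :
    q / R * (w * R + b * (u - R)) + (1 - q) / R * (w * R + b * (d - R)) = w := by
  subst hq
  field_simp [sub_ne_zero.2 hud]
  ring

lemma Hfun_weighted_add (hR : R ≠ 0) (y z : ℝ) :
    Hfun R u d p f g (q / R * y + (1 - q) / R * z) ((y - z) / (u - d)) =
      R⁻¹ * p * f y + R⁻¹ * (1 - p) * g z := by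
  have hud' : u - d ≠ 0 := sub_ne_zero.2 hud
  have hy : (q / R * y + (1 - q) / R * z) * R + (y - z) / (u - d) * (u - R) = y := by
    subst hq; field_simp; ring
  have hz : (q / R * y + (1 - q) / R * z) * R + (y - z) / (u - d) * (d - R) = z := by
    subst hq; field_simp; ring
  rw [Hfun, hy, hz]
  ring

lemma le_Vfun_weighted_add (hR : R ≠ 0) (hbdd : ∀ w, BddAbove (range (Hfun R u d p f g w)))
    (y z : ℝ) :
    R⁻¹ * p * f y + R⁻¹ * (1 - p) * g z ≤ Vfun R u d p f g (q / R * y + (1 - q) / R * z) := by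
  rw [← Hfun_weighted_add hq hud hR]
  exact le_ciSup (hbdd _) _

lemma Vfun_le_of_forall_le (hR : R ≠ 0) {w B : ℝ}
    (hB : ∀ y z, q / R * y + (1 - q) / R * z = w → R⁻¹ * p * f y + R⁻¹ * (1 - p) * g z ≤ B) :
    Vfun R u d p f g w ≤ B :=
  ciSup_le fun b => by
    have := hB _ _ (weighted_add_Hfun_args hq hud hR w b)
    rw [Hfun]
    linarith

theorem rDeriv_Vfun_eq_max (hR : 0 < R) (hq0 : 0 < q) (hq1 : q < 1) (hp0 : 0 ≤ p) (hp1 : p ≤ 1)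
    (hf : ConcaveOn ℝ univ f) (hg : ConcaveOn ℝ univ g)
    (hmax : ∀ w b, Hfun R u d p f g w b ≤ Hfun R u d p f g w (betaFun R u d p f g w))
    {w₀ y₀ z₀ fr fl gr gl : ℝ}
    (hy₀ : w₀ * R + betaFun R u d p f g w₀ * (u - R) = y₀)
    (hz₀ : w₀ * R + betaFun R u d p f g w₀ * (d - R) = z₀)
    (hfr : ∀ᶠ t in 𝓝[>] 0, f (y₀ + t) = f y₀ + fr * t)
    (hfl : ∀ᶠ t in 𝓝[>] 0, f (y₀ - t) = f y₀ - fl * t)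
    (hgr : ∀ᶠ t in 𝓝[>] 0, g (z₀ + t) = g z₀ + gr * t)
    (hgl : ∀ᶠ t in 𝓝[>] 0, g (z₀ - t) = g z₀ - gl * t) :
    rDeriv (Vfun R u d p f g) w₀ = max ((1 - p) / (1 - q) * gr) (p / q * fr) := by
  have hw₀ : q / R * y₀ + (1 - q) / R * z₀ = w₀ := by
    rw [← hy₀, ← hz₀]; exact weighted_add_Hfun_args hq hud hR.ne' _ _
  have hβ : (y₀ - z₀) / (u - d) = betaFun R u d p f g w₀ := by
    rw [← hy₀, ← hz₀]; field_simp [sub_ne_zero.2 hud]; ring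
  have key := rDeriv_supConv_eq_max (S := Vfun R u d p f g)
    (P := fun y => R⁻¹ * p * f y) (Q := fun z => R⁻¹ * (1 - p) * g z) (y₀ := y₀) (z₀ := z₀)
    (Pr := R⁻¹ * p * fr) (Pl := R⁻¹ * p * fl) (Qr := R⁻¹ * (1 - p) * gr)
    (Ql := R⁻¹ * (1 - p) * gl) (div_pos hq0 hR) (div_pos (sub_pos.2 hq1) hR)
    (hf.smul (by positivity)) (hg.smul (mul_nonneg (by positivity) (sub_nonneg.2 hp1)))
    (hfr.mono fun t ht => by rw [ht]; ring) (hfl.mono fun t ht => by rw [ht]; ring)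
    (hgr.mono fun t ht => by rw [ht]; ring) (hgl.mono fun t ht => by rw [ht]; ring)
    (le_Vfun_weighted_add hq hud hR.ne' fun w => ⟨_, forall_mem_range.2 (hmax w)⟩)
    (fun _ _ => Vfun_le_of_forall_le hq hud hR.ne')
    (fun y z hyz => by
      rw [← Hfun_weighted_add hq hud hR.ne', ← Hfun_weighted_add hq hud hR.ne', hyz, hw₀, hβ]
      exact hmax w₀ _)
  rw [hw₀] at key
  rw [key]
  congr 1 <;> field_simp

end ValueFunction

theorem stmt_14_general (R u d p : ℝ) (hd : 0 < d) (hdR : d < R) (hRu : R < u)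
    (hp0 : 0 < p) (hp1 : p < 1)
    (q : ℝ) (hq : q = (R - d) / (u - d))
    (f g : ℝ → ℝ) (Nu Nd : ℕ) (xu xd : ℕ → ℝ)
    (hf : HasSingVals f Nu xu) (hg : HasSingVals g Nd xd)
    (hfnc : ∃ a b : ℝ, f a ≠ f b) (hgnc : ∃ a b : ℝ, g a ≠ g b)
    (w₀ : ℝ) (i j : ℕ) (hi1 : 1 ≤ i) (hiN : i ≤ Nu) (hj1 : 1 ≤ j) (hjN : j ≤ Nd)
    (hmem : (w₀, betaFun R u d p f g w₀) ∈ Cu R u (xu i) ∩ Cd R d (xd j)) :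
    rDeriv (Vfun R u d p f g) w₀ =
      max ((1 - p) / (1 - q) * rDeriv g (xd j)) (p / q * rDeriv f (xu i)) := by
  have hR : 0 < R := hd.trans hdR
  have hq0 : 0 < q := hq ▸ div_pos (sub_pos.2 hdR) (by linarith)
  have hq1 : q < 1 := hq ▸ (div_lt_one (by linarith)).2 (by linarith)
  obtain ⟨⟨hfpw, hfc, xf, hxf⟩, -⟩ := hf
  obtain ⟨⟨hgpw, hgc, xg, hxg⟩, -⟩ := hg
  exact rDeriv_Vfun_eq_max hq (by linarith) hR hq0 hq1 hp0.le hp1.le hfc hgc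
    (Hfun_le_Hfun_betaFun hR hdR hRu hp0 hp1 hfc hxf hfnc hgc hxg hgnc) hmem.1 hmem.2
    (hfpw.eventually_add_eq hi1 hiN) (hfpw.eventually_sub_eq hi1 hiN)
    (hgpw.eventually_add_eq hj1 hjN) (hgpw.eventually_sub_eq hj1 hjN)

/-- If `(w₀, β(w₀)) ∈ C^u_i ∩ C^d_j` for some `1 ≤ i ≤ Nu`, `1 ≤ j ≤ Nd`,
then `V'⁺(w₀) = max{ ((1−p)/(1−q)) g'⁺(x^d_j), (p/q) f'⁺(x^u_i) }`, `q = (R−d)/(u−d)`. -/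
theorem stmt_14 (R u d p : ℝ) (hd : 0 < d) (hdR : d < R) (hRu : R < u)
    (hp0 : 0 < p) (hp1 : p < 1)
    (q : ℝ) (hq : q = (R - d) / (u - d))
    (f g : ℝ → ℝ) (Nu Nd : ℕ) (xu xd : ℕ → ℝ)
    (hf : HasSingVals f Nu xu) (hg : HasSingVals g Nd xd)
    (hNu : 1 ≤ Nu) (hNd : 1 ≤ Nd)
    (hfnc : ∃ a b : ℝ, f a ≠ f b) (hgnc : ∃ a b : ℝ, g a ≠ g b)
    (w₀ : ℝ) (i j : ℕ) (hi1 : 1 ≤ i) (hiN : i ≤ Nu) (hj1 : 1 ≤ j) (hjN : j ≤ Nd)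
    (hmem : (w₀, betaFun R u d p f g w₀) ∈ Cu R u (xu i) ∩ Cd R d (xd j)) :
    rDeriv (Vfun R u d p f g) w₀ =
      max ((1 - p) / (1 - q) * rDeriv g (xd j)) (p / q * rDeriv f (xu i)) :=
  stmt_14_general R u d p hd hdR hRu hp0 hp1 q hq f g Nu Nd xu xd hf hg hfnc hgnc w₀ i j hi1 hiN hj1
    hjN hmem
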